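/- arXiv:1605.07759 — 6 statements merged into one kernel-verified Lean document; each statement's English description precedes it below -/
import Mathlib

section
/- Let D ⊆ ℂ be open and let f : D → ℂ be holomorphic with f′(z) ≠ 0 for every z ∈ D. Define U : D → ℝ by U(z) = log(|f′(z)| / (1 + |f(z)|²)). Then U is smooth on D and satisfies the Liouville equation ΔU(z) = −4·exp(2U(z)) for all z ∈ D, where Δ = ∂²/∂x₁² + ∂²/∂x₂² is the Laplacian with respect to the two real coordinates z = x₁ + i x₂. -/
open Complex Filter

/-- The Laplacian `Δ = ∂²/∂x₁² + ∂²/∂x₂²` of a real-valued function on `ℂ ≃ ℝ²`,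
where `z = x₁ + i x₂`. -/
noncomputable def lap (U : ℂ → ℝ) (z : ℂ) : ℝ :=
  fderiv ℝ (fun w => fderiv ℝ U w 1) z 1 +
    fderiv ℝ (fun w => fderiv ℝ U w Complex.I) z Complex.I

/-! Write `U = log ‖f'‖ - log (1 + ‖f‖²)`. The first term is harmonic, being `log ‖·‖` of the
nonvanishing holomorphic function `f'`. For the second, the chain rule
`Δ (φ ∘ g) = φ'' (g) |∇g|² + φ' (g) Δg` with `φ = log`, `g = 1 + ‖f‖²`, together with
`Δ ‖f‖² = 4 ‖f'‖²` and `|∇ ‖f‖²|² = 4 ‖f‖² ‖f'‖²`, gives `Δ log (1 + ‖f‖²) = 4 ‖f'‖² / (1 + ‖f‖²)²`,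
which is `4 e^{2U}`. -/

open InnerProductSpace Laplacian Topology
open scoped RealInnerProductSpace

theorem ContDiffAt.differentiableAt_fderiv_apply {𝕜 E F : Type*} [NontriviallyNormedField 𝕜]
    [NormedAddCommGroup E] [NormedSpace 𝕜 E] [NormedAddCommGroup F] [NormedSpace 𝕜 F]
    {u : E → F} {z : E} (hu : ContDiffAt 𝕜 2 u z) (v : E) :
    DifferentiableAt 𝕜 (fun w => fderiv 𝕜 u w v) z :=
  ((hu.fderiv_right (m := 1) le_rfl).differentiableAt one_ne_zero).clm_apply
    (differentiableAt_const v)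

theorem ContDiffAt.eventually_differentiableAt {𝕜 E F : Type*} [NontriviallyNormedField 𝕜]
    [NormedAddCommGroup E] [NormedSpace 𝕜 E] [NormedAddCommGroup F] [NormedSpace 𝕜 F]
    {u : E → F} {z : E} (hu : ContDiffAt 𝕜 2 u z) :
    ∀ᶠ w in 𝓝 z, DifferentiableAt 𝕜 u w :=
  (hu.eventually (by simp)).mono fun _ hw => hw.differentiableAt two_ne_zero

section
variable {u g : ℂ → ℝ} {φ : ℝ → ℝ} {z : ℂ}

theorem lap_eq_laplacian (hu : ContDiffAt ℝ 2 u z) : lap u z = Δ u z := by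
  have hdu : DifferentiableAt ℝ (fderiv ℝ u) z :=
    (hu.fderiv_right (m := 1) le_rfl).differentiableAt one_ne_zero
  simp [lap, laplacian_eq_iteratedFDeriv_complexPlane, iteratedFDeriv_two_apply,
    fderiv_clm_apply hdu (differentiableAt_const _)]

theorem lap_const_add (c : ℝ) : lap (fun w => c + u w) z = lap u z := by
  simp only [lap, fderiv_const_add]

theorem fderiv_fderiv_comp_apply (hφ : ContDiffAt ℝ 2 φ (g z)) (hg : ContDiffAt ℝ 2 g z)
    (v : ℂ) :
    fderiv ℝ (fun w => fderiv ℝ (φ ∘ g) w v) z v =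
      deriv (deriv φ) (g z) * fderiv ℝ g z v ^ 2 +
        deriv φ (g z) * fderiv ℝ (fun w => fderiv ℝ g w v) z v := by
  have hfirst : (fun w => fderiv ℝ (φ ∘ g) w v) =ᶠ[𝓝 z]
      fun w => deriv φ (g w) * fderiv ℝ g w v := by
    filter_upwards [hg.continuousAt.eventually hφ.eventually_differentiableAt,
      hg.eventually_differentiableAt] with w hφw hgw
    rw [(hφw.hasDerivAt.comp_hasFDerivAt w hgw.hasFDerivAt).fderiv]
    rfl
  have hdφ : HasDerivAt (deriv φ) (deriv (deriv φ) (g z)) (g z) :=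
    (hφ.differentiableAt_fderiv_apply 1).hasDerivAt
  have hsecond : HasFDerivAt (fun w => deriv φ (g w) * fderiv ℝ g w v) _ z :=
    (hdφ.comp_hasFDerivAt z (hg.differentiableAt two_ne_zero).hasFDerivAt).fun_mul
      (hg.differentiableAt_fderiv_apply v).hasFDerivAt
  rw [hfirst.fderiv_eq, hsecond.fderiv]
  simp only [Function.comp_apply, add_apply, smul_apply, smul_eq_mul]
  ring

theorem lap_comp (hφ : ContDiffAt ℝ 2 φ (g z)) (hg : ContDiffAt ℝ 2 g z) :
    lap (φ ∘ g) z = deriv (deriv φ) (g z) * (fderiv ℝ g z 1 ^ 2 + fderiv ℝ g z I ^ 2) +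
      deriv φ (g z) * lap g z := by
  rw [lap, lap, fderiv_fderiv_comp_apply hφ hg, fderiv_fderiv_comp_apply hφ hg]
  ring


end

section
variable {f : ℂ → ℂ} {z : ℂ}

theorem DifferentiableAt.fderiv_real_norm_sq_apply (hf : DifferentiableAt ℂ f z) (v : ℂ) :
    fderiv ℝ (fun w => ‖f w‖ ^ 2) z v = 2 * ⟪f z, v * deriv f z⟫ := by
  rw [(hf.hasFDerivAt.restrictScalars ℝ).norm_sq.fderiv]
  simp only [smul_apply, ContinuousLinearMap.comp_apply,
    ContinuousLinearMap.coe_restrictScalars', fderiv_eq_smul_deriv, smul_eq_mul, coe_innerSL_apply,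
    nsmul_eq_mul, Nat.cast_ofNat]

theorem AnalyticAt.fderiv_fderiv_real_norm_sq_apply (hf : AnalyticAt ℂ f z) (v : ℂ) :
    fderiv ℝ (fun w => fderiv ℝ (fun x => ‖f x‖ ^ 2) w v) z v =
      2 * (‖v * deriv f z‖ ^ 2 + ⟪f z, v * (v * deriv (deriv f) z)⟫) := by
  have hfirst : (fun w => fderiv ℝ (fun x => ‖f x‖ ^ 2) w v) =ᶠ[𝓝 z]
      fun w => 2 * ⟪f w, v * deriv f w⟫ := by
    filter_upwards [hf.eventually_analyticAt] with w hw
    exact hw.differentiableAt.fderiv_real_norm_sq_apply v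
  have hf' : HasDerivAt (fun w => v * deriv f w) (v * deriv (deriv f) z) z :=
    hf.deriv.differentiableAt.hasDerivAt.const_mul v
  have hsecond := ((hf.differentiableAt.hasDerivAt.hasFDerivAt.restrictScalars ℝ).inner ℝ
    (hf'.hasFDerivAt.restrictScalars ℝ)).const_mul 2
  rw [hfirst.fderiv_eq, hsecond.fderiv]
  simp only [smul_apply, ContinuousLinearMap.comp_apply,
    ContinuousLinearMap.prod_apply, ContinuousLinearMap.coe_restrictScalars',
    ContinuousLinearMap.toSpanSingleton_apply, smul_eq_mul, fderivInnerCLM_apply,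
    real_inner_self_eq_norm_sq, add_comm]

theorem AnalyticAt.lap_norm_sq (hf : AnalyticAt ℂ f z) :
    lap (fun w => ‖f w‖ ^ 2) z = 4 * ‖deriv f z‖ ^ 2 := by
  -- the `f''` terms cancel since `1 + I ^ 2 = 0`: this is where holomorphy enters
  rw [lap, hf.fderiv_fderiv_real_norm_sq_apply, hf.fderiv_fderiv_real_norm_sq_apply]
  simp only [one_mul, ← mul_assoc, I_mul_I, neg_one_mul, inner_neg_right, norm_mul, norm_I]
  ring

theorem DifferentiableAt.sum_sq_fderiv_real_norm_sq (hf : DifferentiableAt ℂ f z) :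
    fderiv ℝ (fun w => ‖f w‖ ^ 2) z 1 ^ 2 + fderiv ℝ (fun w => ‖f w‖ ^ 2) z I ^ 2 =
      4 * ‖f z‖ ^ 2 * ‖deriv f z‖ ^ 2 := by
  rw [hf.fderiv_real_norm_sq_apply, hf.fderiv_real_norm_sq_apply]
  simp only [one_mul, Complex.inner, mul_re, mul_im, conj_re, conj_im, I_re, I_im,
    Complex.sq_norm, normSq_apply]
  ring

theorem AnalyticAt.contDiffAt_log_one_add_norm_sq (hf : AnalyticAt ℂ f z) {n : WithTop ℕ∞} :
    ContDiffAt ℝ n (fun w => Real.log (1 + ‖f w‖ ^ 2)) z :=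
  (contDiffAt_const.add ((hf.contDiffAt.restrict_scalars ℝ).norm_sq ℝ)).log (by positivity)

theorem AnalyticAt.contDiffAt_log_norm (hf : AnalyticAt ℂ f z) (hfz : f z ≠ 0) {n : WithTop ℕ∞} :
    ContDiffAt ℝ n (fun w => Real.log ‖f w‖) z :=
  ((hf.contDiffAt.restrict_scalars ℝ).norm ℝ hfz).log (norm_ne_zero_iff.2 hfz)

theorem AnalyticAt.lap_log_one_add_norm_sq (hf : AnalyticAt ℂ f z) :
    lap (fun w => Real.log (1 + ‖f w‖ ^ 2)) z = 4 * ‖deriv f z‖ ^ 2 / (1 + ‖f z‖ ^ 2) ^ 2 := by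
  have hN : 1 + ‖f z‖ ^ 2 ≠ 0 := by positivity
  have hcomp := lap_comp (Real.contDiffAt_log.2 hN)
    (contDiffAt_const.add ((hf.contDiffAt.restrict_scalars ℝ).norm_sq ℝ))
  rw [Function.comp_def, lap_const_add, fderiv_const_add,
    hf.differentiableAt.sum_sq_fderiv_real_norm_sq, hf.lap_norm_sq, Real.deriv_log',
    deriv_inv] at hcomp
  rw [hcomp]
  field_simp
  ring

end

theorem Real.exp_two_mul_log {x : ℝ} (hx : 0 < x) : Real.exp (2 * Real.log x) = x ^ 2 := by
  rw [two_mul, Real.exp_add, Real.exp_log hx, sq]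

/-- If `f` is holomorphic on an open set `D ⊆ ℂ` with nowhere vanishing
derivative, then `U(z) = log(|f′(z)| / (1 + |f(z)|²))` is smooth on `D` and satisfies
the Liouville equation `ΔU = −4 e^{2U}` on `D`. -/
theorem liouville_local_solution (D : Set ℂ) (hD : IsOpen D) (f : ℂ → ℂ)
    (hf : DifferentiableOn ℂ f D) (hf' : ∀ z ∈ D, deriv f z ≠ 0)
    (U : ℂ → ℝ)
    (hU : ∀ z ∈ D, U z = Real.log (‖deriv f z‖ / (1 + ‖f z‖ ^ 2))) :
    ContDiffOn ℝ (⊤ : ℕ∞) U D ∧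
      ∀ z ∈ D, lap U z = -4 * Real.exp (2 * U z) := by
  have hfa : AnalyticOnNhd ℂ f D := hf.analyticOnNhd hD
  set L : ℂ → ℝ := fun w => Real.log ‖deriv f w‖
  set V : ℂ → ℝ := fun w => Real.log (1 + ‖f w‖ ^ 2)
  have hN : ∀ w, 0 < 1 + ‖f w‖ ^ 2 := fun w => by positivity
  have hUD : Set.EqOn U (L - V) D := fun w hw => by
    rw [hU w hw, Real.log_div (norm_ne_zero_iff.2 (hf' w hw)) (hN w).ne', Pi.sub_apply]
  have hUsmooth : ContDiffOn ℝ (⊤ : ℕ∞) U D := fun z hz =>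
    (((hfa z hz).deriv.contDiffAt_log_norm (hf' z hz)).sub
      (hfa z hz).contDiffAt_log_one_add_norm_sq).contDiffWithinAt.congr hUD (hUD hz)
  refine ⟨hUsmooth, fun z hz => ?_⟩
  have hL := (hfa z hz).deriv.harmonicAt_log_norm (hf' z hz)
  have hV : ContDiffAt ℝ 2 V z := (hfa z hz).contDiffAt_log_one_add_norm_sq
  have hU2 : ContDiffAt ℝ 2 U z :=
    (hUsmooth.contDiffAt (hD.mem_nhds hz)).of_le (WithTop.coe_le_coe.2 le_top)
  rw [lap_eq_laplacian hU2,
    (laplacian_congr_nhds (hUD.eventuallyEq_of_mem (hD.mem_nhds hz))).eq_of_nhds,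
    hL.1.laplacian_sub hV, hL.2.eq_of_nhds, Pi.zero_apply, ← lap_eq_laplacian hV,
    (hfa z hz).lap_log_one_add_norm_sq, hU z hz,
    Real.exp_two_mul_log (div_pos (norm_pos_iff.2 (hf' z hz)) (hN z)), div_pow]
  ring
end

section
/- Let D ⊆ ℂ be open and let U : D → ℝ be a smooth function satisfying ∂_z ∂_{z̄} U = −exp(2U) on D. Then the function W := ∂_z² U − (∂_z U)² satisfies ∂_{z̄} W = 0 on D; in particular W is holomorphic on D. -/
open Complex Filter

/-- The Wirtinger derivative `∂_z = ½(∂/∂x₁ − i ∂/∂x₂)` on `ℂ ≃ ℝ²`, `z = x₁ + i x₂`. -/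
noncomputable def wz (f : ℂ → ℂ) (z : ℂ) : ℂ :=
  (fderiv ℝ f z 1 - Complex.I * fderiv ℝ f z Complex.I) / 2

/-- The Wirtinger derivative `∂_{z̄} = ½(∂/∂x₁ + i ∂/∂x₂)` on `ℂ ≃ ℝ²`, `z = x₁ + i x₂`. -/
noncomputable def wzbar (f : ℂ → ℂ) (z : ℂ) : ℂ :=
  (fderiv ℝ f z 1 + Complex.I * fderiv ℝ f z Complex.I) / 2

/-!
For a `C²` function the Wirtinger derivatives commute (symmetry of the second derivative), so the
equation reads `∂_{z̄} ∂_z U = −e^{2U}` as well. Differentiating `W` then gives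
`∂_{z̄} W = ∂_z(∂_{z̄} ∂_z U) − 2 ∂_z U · ∂_{z̄} ∂_z U = ∂_z(−e^{2U}) + 2 ∂_z U · e^{2U} = 0`,
and a real-differentiable function with vanishing `∂_{z̄}` satisfies the Cauchy–Riemann
equation, hence is holomorphic.
-/

open Topology ContinuousLinearMap

noncomputable def wzCLM : (ℂ →L[ℝ] ℂ) →L[ℝ] ℂ :=
  (2 : ℂ)⁻¹ • (apply ℝ ℂ 1 - I • apply ℝ ℂ I)

noncomputable def wzbarCLM : (ℂ →L[ℝ] ℂ) →L[ℝ] ℂ :=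
  (2 : ℂ)⁻¹ • (apply ℝ ℂ 1 + I • apply ℝ ℂ I)

@[simp] lemma wzCLM_apply (L : ℂ →L[ℝ] ℂ) : wzCLM L = (L 1 - I * L I) / 2 := by
  simp only [wzCLM, smul_apply, sub_apply, apply_apply, smul_eq_mul]
  ring

@[simp] lemma wzbarCLM_apply (L : ℂ →L[ℝ] ℂ) : wzbarCLM L = (L 1 + I * L I) / 2 := by
  simp only [wzbarCLM, smul_add, add_apply, smul_apply, apply_apply, smul_eq_mul]
  ring

section Wirtinger

variable {f g : ℂ → ℂ} {z : ℂ}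

lemma wz_eq_comp (f : ℂ → ℂ) : wz f = wzCLM ∘ fderiv ℝ f := by
  ext z; simp [wz]

lemma wzbar_eq_comp (f : ℂ → ℂ) : wzbar f = wzbarCLM ∘ fderiv ℝ f := by
  ext z; simp [wzbar]

lemma ContDiffOn.wz {D : Set ℂ} {m n : WithTop ℕ∞} (hf : ContDiffOn ℝ n f D) (hD : IsOpen D)
    (hmn : m + 1 ≤ n) : ContDiffOn ℝ m (wz f) D := by
  rw [wz_eq_comp]
  exact wzCLM.contDiff.comp_contDiffOn (hf.fderiv_of_isOpen hD hmn)

lemma fderiv_wz (hf : DifferentiableAt ℝ (fderiv ℝ f) z) :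
    fderiv ℝ (wz f) z = wzCLM ∘L fderiv ℝ (fderiv ℝ f) z := by
  rw [wz_eq_comp]
  exact (wzCLM.hasFDerivAt.comp z hf.hasFDerivAt).fderiv

lemma fderiv_wzbar (hf : DifferentiableAt ℝ (fderiv ℝ f) z) :
    fderiv ℝ (wzbar f) z = wzbarCLM ∘L fderiv ℝ (fderiv ℝ f) z := by
  rw [wzbar_eq_comp]
  exact (wzbarCLM.hasFDerivAt.comp z hf.hasFDerivAt).fderiv

lemma ContDiffAt.wzbar_wz_comm (hf : ContDiffAt ℝ 2 f z) : wzbar (wz f) z = wz (wzbar f) z := by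
  have hf' : DifferentiableAt ℝ (fderiv ℝ f) z :=
    (hf.fderiv_right (m := 1) le_rfl).differentiableAt one_ne_zero
  have hsymm := hf.isSymmSndFDerivAt (by simp)
  simp only [wz, wzbar, fderiv_wz hf', fderiv_wzbar hf', comp_apply, wzCLM_apply,
    wzbarCLM_apply, hsymm 1 I]
  ring

lemma Filter.EventuallyEq.wz_eq (h : f =ᶠ[𝓝 z] g) : wz f z = wz g z := by
  simp only [wz, h.fderiv_eq]

lemma wzbar_sub (hf : DifferentiableAt ℝ f z) (hg : DifferentiableAt ℝ g z) :
    wzbar (fun y => f y - g y) z = wzbar f z - wzbar g z := by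
  simp only [wzbar, fderiv_fun_sub hf hg, sub_apply]
  ring

lemma HasDerivAt.wz_comp {h : ℂ → ℂ} {h' : ℂ} (hh : HasDerivAt h h' (g z))
    (hg : DifferentiableAt ℝ g z) : wz (fun y => h (g y)) z = h' * wz g z := by
  have hchain := ((hh.hasFDerivAt.restrictScalars ℝ).comp z hg.hasFDerivAt).fderiv
  simp only [Function.comp_def] at hchain
  simp only [wz, hchain, comp_apply, coe_restrictScalars', toSpanSingleton_apply, smul_eq_mul]
  ring

lemma HasDerivAt.wzbar_comp {h : ℂ → ℂ} {h' : ℂ} (hh : HasDerivAt h h' (g z))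
    (hg : DifferentiableAt ℝ g z) : wzbar (fun y => h (g y)) z = h' * wzbar g z := by
  have hchain := ((hh.hasFDerivAt.restrictScalars ℝ).comp z hg.hasFDerivAt).fderiv
  simp only [Function.comp_def] at hchain
  simp only [wzbar, hchain, comp_apply, coe_restrictScalars', toSpanSingleton_apply, smul_eq_mul]
  ring

lemma differentiableAt_complex_of_wzbar_eq_zero (hf : DifferentiableAt ℝ f z)
    (h : wzbar f z = 0) : DifferentiableAt ℂ f z := by
  refine differentiableAt_complex_iff_differentiableAt_real.2 ⟨hf, ?_⟩
  simp only [wzbar] at h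
  rw [smul_eq_mul]
  linear_combination (-2 * I) * h + fderiv ℝ f z I * I_sq

end Wirtinger

/-- If `U` is a smooth real solution of `∂_z ∂_{z̄} U = −e^{2U}` on an open
set `D ⊆ ℂ`, then the W-invariant `W = ∂_z² U − (∂_z U)²` satisfies `∂_{z̄} W = 0` on `D`;
in particular `W` is holomorphic on `D`. -/
theorem liouville_w_invariant_holomorphic (D : Set ℂ) (hD : IsOpen D) (U : ℂ → ℝ)
    (hU : ContDiffOn ℝ (⊤ : ℕ∞) U D)
    (heq : ∀ z ∈ D, wz (wzbar (fun w => (U w : ℂ))) z = -Complex.exp (2 * (U z : ℂ))) :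
    (∀ z ∈ D,
      wzbar (fun w => wz (wz (fun x => (U x : ℂ))) w - (wz (fun x => (U x : ℂ)) w) ^ 2) z = 0) ∧
    DifferentiableOn ℂ
      (fun w => wz (wz (fun x => (U x : ℂ))) w - (wz (fun x => (U x : ℂ)) w) ^ 2) D := by
  set u : ℂ → ℂ := fun w => (U w : ℂ)
  have hC2 {f : ℂ → ℂ} (hf : ContDiffOn ℝ (⊤ : ℕ∞) f D) {z : ℂ} (hz : z ∈ D) :
      ContDiffAt ℝ 2 f z :=
    (hf.contDiffAt (hD.mem_nhds hz)).of_le (WithTop.coe_le_coe.2 le_top)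
  have hu : ContDiffOn ℝ (⊤ : ℕ∞) u D := ofRealCLM.contDiff.comp_contDiffOn hU
  have hu' : ContDiffOn ℝ (⊤ : ℕ∞) (wz u) D := hu.wz hD (by simp)
  have hu'' : ContDiffOn ℝ (⊤ : ℕ∞) (wz (wz u)) D := hu'.wz hD (by simp)
  have hW : ContDiffOn ℝ (⊤ : ℕ∞) (fun w => wz (wz u) w - wz u w ^ 2) D := hu''.sub (hu'.pow 2)
  have hliouville : ∀ w ∈ D, wzbar (wz u) w = -exp (2 * u w) := fun w hw =>
    (hC2 hu hw).wzbar_wz_comm.trans (heq w hw)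
  have hWbar : ∀ z ∈ D, wzbar (fun w => wz (wz u) w - wz u w ^ 2) z = 0 := by
    intro z hz
    have hdiff {f : ℂ → ℂ} (hf : ContDiffOn ℝ (⊤ : ℕ∞) f D) : DifferentiableAt ℝ f z :=
      (hC2 hf hz).differentiableAt two_ne_zero
    have hsq : wzbar (fun w => wz u w ^ 2) z = 2 * wz u z * wzbar (wz u) z := by
      simpa using (hasDerivAt_pow 2 (wz u z)).wzbar_comp (hdiff hu')
    have hexp : wz (fun w => -exp (2 * u w)) z = -(exp (2 * u z) * (2 * 1)) * wz u z :=
      (((hasDerivAt_id' (u z)).const_mul 2).cexp.neg).wz_comp (hdiff hu)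
    rw [wzbar_sub (hdiff hu'') (hdiff (hu'.pow 2)), hsq, (hC2 hu' hz).wzbar_wz_comm,
      (eventuallyEq_of_mem (hD.mem_nhds hz) hliouville).wz_eq, hexp, hliouville z hz]
    ring
  exact ⟨hWbar, fun z hz => (differentiableAt_complex_of_wzbar_eq_zero
    ((hC2 hW hz).differentiableAt two_ne_zero) (hWbar z hz)).differentiableWithinAt⟩
end

section
/- Let m, n ≥ 1 and let e₁, …, e_n be strictly lower triangular complex m×m matrices, and let μ₁, …, μ_n > 0 be real numbers. For a finite sequence s = (i₁, …, i_k) with entries in {1, …, n} set φ(s) = μ_{i₁} + ⋯ + μ_{i_k}, p(s) = ∏_{j=1}^{k} (μ_{i_j} + μ_{i_{j+1}} + ⋯ + μ_{i_k}), and e_s = e_{i_k} ⋯ e_{i₂} e_{i₁} (with φ = 0, p = 1, e_s = Id for the empty sequence). Define Φ : ℂ∖ℝ_{≤0} → M_m(ℂ) by Φ(z) = Σ_s z^{φ(s)} e_s / p(s), the sum ranging over all sequences of length < m. Then Φ is differentiable with Φ′(z) = Φ(z) · (Σ_{i=1}^n z^{μ_i − 1} e_i) for every z ∈ ℂ∖ℝ_{≤0},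 and Φ(z) → Id as z → 0 within ℂ∖ℝ_{≤0}. -/
open Complex Filter

variable {n m : ℕ}

/-- `φ(s) = μ_{i₁} + ⋯ + μ_{i_k}` for a finite sequence `s = (i₁, …, i_k)`. -/
def phiSeq (μ : Fin n → ℝ) (s : List (Fin n)) : ℝ := (s.map μ).sum

/-- `p(s) = ∏_{j=1}^{k} (μ_{i_j} + μ_{i_{j+1}} + ⋯ + μ_{i_k})`, the Kostant denominator. -/
def pSeq (μ : Fin n → ℝ) : List (Fin n) → ℝ
  | [] => 1
  | i :: t => ((i :: t).map μ).sum * pSeq μ t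

/-- `e_s = e_{i_k} ⋯ e_{i₂} e_{i₁}` for `s = (i₁, …, i_k)` (identity for the empty
sequence). -/
noncomputable def eSeq (e : Fin n → Matrix (Fin m) (Fin m) ℂ) : List (Fin n) → Matrix (Fin m) (Fin m) ℂ
  | [] => 1
  | i :: t => eSeq e t * e i

/-- The Kostant series `Φ(z) = Σ_s z^{φ(s)} e_s / p(s)`, summed over all sequences of
length `< m` (all longer products of strictly lower triangular matrices vanish). -/
noncomputable def PhiK (μ : Fin n → ℝ) (e : Fin n → Matrix (Fin m) (Fin m) ℂ) (z : ℂ) :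
    Matrix (Fin m) (Fin m) ℂ :=
  ∑ k ∈ Finset.range m, ∑ t : Fin k → Fin n,
    ((z ^ ((phiSeq μ (List.ofFn t) : ℝ) : ℂ)) / ((pSeq μ (List.ofFn t) : ℝ) : ℂ)) •
      eSeq e (List.ofFn t)

/-!
Differentiating `z ^ φ(i :: s) / p(i :: s)` brings down the factor `φ(i :: s)`, which cancels
against the first factor of `p(i :: s) = φ(i :: s) · p(s)`; what remains is the `s`-term of `Φ`
times `z ^ (μ_i - 1) e_i`. Hence the termwise derivative of `Φ` is `Φ · Σ_i z ^ (μ_i - 1) e_i`,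
the shift in length being exact because products of `m` strictly lower triangular matrices
vanish. As `z → 0` every nonempty term tends to `0`, since `φ(s) > 0`, leaving the identity.
-/

lemma phiSeq_cons (μ : Fin n → ℝ) (i : Fin n) (l : List (Fin n)) :
    phiSeq μ (i :: l) = μ i + phiSeq μ l := by
  simp [phiSeq]

lemma phiSeq_nonneg {μ : Fin n → ℝ} (hμ : ∀ i, 0 ≤ μ i) (l : List (Fin n)) :
    0 ≤ phiSeq μ l :=
  List.sum_nonneg (by simpa using fun i _ => hμ i)

lemma phiSeq_cons_pos {μ : Fin n → ℝ} (hμ : ∀ i, 0 < μ i) (i : Fin n) (l : List (Fin n)) :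
    0 < phiSeq μ (i :: l) := by
  rw [phiSeq_cons]
  exact add_pos_of_pos_of_nonneg (hμ i) (phiSeq_nonneg (fun j => (hμ j).le) l)

lemma pSeq_cons (μ : Fin n → ℝ) (i : Fin n) (l : List (Fin n)) :
    pSeq μ (i :: l) = phiSeq μ (i :: l) * pSeq μ l :=
  rfl

lemma pSeq_pos {μ : Fin n → ℝ} (hμ : ∀ i, 0 < μ i) : ∀ l : List (Fin n), 0 < pSeq μ l
  | [] => one_pos
  | i :: l => by
    rw [pSeq_cons]
    exact mul_pos (phiSeq_cons_pos hμ i l) (pSeq_pos hμ l)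

section Nilpotent

variable {e : Fin n → Matrix (Fin m) (Fin m) ℂ}

/-- Each strictly lower triangular factor pushes the nonzero entries one diagonal further down. -/
lemma eSeq_apply_eq_zero (he : ∀ i, ∀ j k : Fin m, (j : ℕ) ≤ k → e i j k = 0) :
    ∀ (l : List (Fin n)) (j k : Fin m), (j : ℕ) < k + l.length → eSeq e l j k = 0
  | [], j, k, h => Matrix.one_apply_ne (Fin.ne_of_lt h)
  | i :: l, j, k, h => by
    rw [eSeq, Matrix.mul_apply]
    refine Finset.sum_eq_zero fun r _ => ?_
    rcases le_or_gt (r : ℕ) k with hr | hr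
    · rw [he i r k hr, mul_zero]
    · rw [eSeq_apply_eq_zero he l j r (by simp only [List.length_cons] at h; omega), zero_mul]

lemma eSeq_eq_zero_of_le_length (he : ∀ i, ∀ j k : Fin m, (j : ℕ) ≤ k → e i j k = 0)
    {l : List (Fin n)} (hl : m ≤ l.length) : eSeq e l = 0 := by
  ext j k
  exact eSeq_apply_eq_zero he l j k (by omega)

end Nilpotent

lemma sum_pi_fin_succ_ofFn {M : Type*} [AddCommMonoid M] {α : Type*} [Fintype α] (k : ℕ)
    (f : List α → M) :
    ∑ t : Fin (k + 1) → α, f (List.ofFn t) = ∑ t : Fin k → α, ∑ i, f (i :: List.ofFn t) := by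
  rw [← Fintype.sum_prod_type' fun t i => f (i :: List.ofFn t)]
  refine (Fintype.sum_equiv ((Equiv.prodComm _ _).trans (Fin.consEquiv fun _ => α)) _ _ ?_).symm
  rintro ⟨t, i⟩
  simp [Fin.consEquiv, List.ofFn_succ]

section KostantTerms

variable (μ : Fin n → ℝ) (e : Fin n → Matrix (Fin m) (Fin m) ℂ)

noncomputable def kostantTerm (z : ℂ) (l : List (Fin n)) : Matrix (Fin m) (Fin m) ℂ :=
  (z ^ (phiSeq μ l : ℂ) / (pSeq μ l : ℂ)) • eSeq e l

noncomputable def kostantTermDeriv (z : ℂ) (l : List (Fin n)) : Matrix (Fin m) (Fin m) ℂ :=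
  ((phiSeq μ l : ℂ) * z ^ ((phiSeq μ l : ℂ) - 1) / (pSeq μ l : ℂ)) • eSeq e l

lemma PhiK_eq_sum_kostantTerm (z : ℂ) :
    PhiK μ e z = ∑ k ∈ Finset.range m, ∑ t : Fin k → Fin n, kostantTerm μ e z (List.ofFn t) :=
  rfl

lemma hasDerivAt_kostantTerm_apply {z : ℂ} (hz : z ∈ slitPlane) (l : List (Fin n))
    (j k : Fin m) :
    HasDerivAt (fun w => kostantTerm μ e w l j k) (kostantTermDeriv μ e z l j k) z :=
  ((hasStrictDerivAt_cpow_const hz).hasDerivAt.div_const _).mul_const _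

lemma kostantTermDeriv_nil (z : ℂ) : kostantTermDeriv μ e z [] = 0 := by
  simp [kostantTermDeriv, phiSeq]

variable {μ}

lemma kostantTerm_mul_smul {z : ℂ} (hz : z ≠ 0) (hμ : ∀ i, 0 < μ i) (l : List (Fin n))
    (i : Fin n) :
    kostantTerm μ e z l * (z ^ ((μ i - 1 : ℝ) : ℂ) • e i) = kostantTermDeriv μ e z (i :: l) := by
  have hp : (pSeq μ l : ℂ) ≠ 0 := by exact_mod_cast (pSeq_pos hμ l).ne'
  have hφ : (μ i : ℂ) + phiSeq μ l ≠ 0 := by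
    exact_mod_cast phiSeq_cons μ i l ▸ (phiSeq_cons_pos hμ i l).ne'
  have hexp : ((μ i + phiSeq μ l : ℝ) : ℂ) - 1 = phiSeq μ l + ((μ i - 1 : ℝ) : ℂ) := by
    push_cast; ring
  rw [kostantTerm, kostantTermDeriv, Matrix.smul_mul, Matrix.mul_smul, smul_smul, pSeq_cons,
    phiSeq_cons, hexp, cpow_add _ _ hz]
  congr 1
  push_cast
  field_simp

lemma sum_kostantTerm_mul_sum {z : ℂ} (hz : z ≠ 0) (hμ : ∀ i, 0 < μ i) (k : ℕ) :
    (∑ t : Fin k → Fin n, kostantTerm μ e z (List.ofFn t)) *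
        ∑ i, z ^ ((μ i - 1 : ℝ) : ℂ) • e i =
      ∑ t : Fin (k + 1) → Fin n, kostantTermDeriv μ e z (List.ofFn t) := by
  simp only [sum_pi_fin_succ_ofFn, Finset.sum_mul, Finset.mul_sum, kostantTerm_mul_smul e hz hμ]
  exact Finset.sum_comm

lemma sum_kostantTermDeriv {z : ℂ} (hz : z ≠ 0) (hμ : ∀ i, 0 < μ i)
    (he : ∀ i, ∀ j k : Fin m, (j : ℕ) ≤ k → e i j k = 0) :
    ∑ k ∈ Finset.range m, ∑ t : Fin k → Fin n, kostantTermDeriv μ e z (List.ofFn t) =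
      PhiK μ e z * ∑ i, z ^ ((μ i - 1 : ℝ) : ℂ) • e i := by
  set D : ℕ → Matrix (Fin m) (Fin m) ℂ :=
    fun k => ∑ t : Fin k → Fin n, kostantTermDeriv μ e z (List.ofFn t)
  have hD0 : D 0 = 0 := by simp [D, kostantTermDeriv_nil]
  have hDm : D m = 0 :=
    Finset.sum_eq_zero fun t _ => by
      rw [kostantTermDeriv, eSeq_eq_zero_of_le_length he (by simp), smul_zero]
  calc ∑ k ∈ Finset.range m, D k
      = ∑ k ∈ Finset.range (m + 1), D k := by rw [Finset.sum_range_succ, hDm, add_zero]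
    _ = ∑ k ∈ Finset.range m, D (k + 1) := by rw [Finset.sum_range_succ', hD0, add_zero]
    _ = PhiK μ e z * ∑ i, z ^ ((μ i - 1 : ℝ) : ℂ) • e i := by
      simp only [D, ← sum_kostantTerm_mul_sum e hz hμ, PhiK_eq_sum_kostantTerm, Finset.sum_mul]

lemma tendsto_kostantTerm_apply (hμ : ∀ i, 0 ≤ μ i) (l : List (Fin n)) (j k : Fin m) :
    Tendsto (fun w => kostantTerm μ e w l j k) (nhds 0) (nhds (kostantTerm μ e 0 l j k)) := by
  refine ((Tendsto.div_const ?_ _).mul_const _)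
  rcases (phiSeq_nonneg hμ l).eq_or_lt with hφ | hφ
  · simp only [← hφ, ofReal_zero, cpow_zero]
    exact tendsto_const_nhds
  · exact continuousAt_cpow_const_of_re_pos (by simp) (by simpa using hφ)

lemma kostantTerm_zero_cons (hμ : ∀ i, 0 < μ i) (i : Fin n) (l : List (Fin n)) :
    kostantTerm μ e 0 (i :: l) = 0 := by
  rw [kostantTerm, zero_cpow (by exact_mod_cast (phiSeq_cons_pos hμ i l).ne'), zero_div,
    zero_smul]

lemma PhiK_zero (hμ : ∀ i, 0 < μ i) : PhiK μ e 0 = 1 := by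
  rcases m with _ | m
  · exact Subsingleton.elim _ _
  · rw [PhiK_eq_sum_kostantTerm, Finset.sum_range_succ']
    simp only [sum_pi_fin_succ_ofFn, kostantTerm_zero_cons e hμ, Finset.sum_const_zero, zero_add]
    simp [kostantTerm, phiSeq, pSeq, eSeq]

end KostantTerms

theorem kostant_series_solves_ode_general
    (e : Fin n → Matrix (Fin m) (Fin m) ℂ)
    (he : ∀ i, ∀ j k : Fin m, (j : ℕ) ≤ (k : ℕ) → e i j k = 0)
    (μ : Fin n → ℝ) (hμ : ∀ i, 0 < μ i) :
    (∀ z ∈ Complex.slitPlane, ∀ j k : Fin m,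
      HasDerivAt (fun w => PhiK μ e w j k)
        ((PhiK μ e z * ∑ i : Fin n, (z ^ (((μ i - 1 : ℝ)) : ℂ)) • e i) j k) z) ∧
    (∀ j k : Fin m,
      Tendsto (fun w => PhiK μ e w j k) (nhdsWithin 0 Complex.slitPlane)
        (nhds ((1 : Matrix (Fin m) (Fin m) ℂ) j k))) := by
  refine ⟨fun z hz r c => ?_, fun r c => ?_⟩
  · rw [← sum_kostantTermDeriv e (slitPlane_ne_zero hz) hμ he]
    simp only [PhiK_eq_sum_kostantTerm, Matrix.sum_apply]
    exact HasDerivAt.fun_sum fun k _ => HasDerivAt.fun_sum fun t _ =>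
      hasDerivAt_kostantTerm_apply μ e hz _ r c
  · rw [← PhiK_zero e hμ]
    simp only [PhiK_eq_sum_kostantTerm, Matrix.sum_apply]
    refine Tendsto.mono_left ?_ nhdsWithin_le_nhds
    exact tendsto_finsetSum _ fun k _ => tendsto_finsetSum _ fun t _ =>
      tendsto_kostantTerm_apply e (fun i => (hμ i).le) _ r c

/-- For strictly lower triangular `e₁, …, e_n ∈ M_m(ℂ)` and reals
`μ_i > 0`, the Kostant series `Φ(z) = Σ_s z^{φ(s)} e_s / p(s)` satisfies
`Φ′(z) = Φ(z) · (Σ_i z^{μ_i − 1} e_i)` on `ℂ∖ℝ_{≤0}` (entrywise), and `Φ(z) → Id`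
as `z → 0` within `ℂ∖ℝ_{≤0}`. -/
theorem kostant_series_solves_ode (hn : 1 ≤ n) (hm : 1 ≤ m)
    (e : Fin n → Matrix (Fin m) (Fin m) ℂ)
    (he : ∀ i, ∀ j k : Fin m, (j : ℕ) ≤ (k : ℕ) → e i j k = 0)
    (μ : Fin n → ℝ) (hμ : ∀ i, 0 < μ i) :
    (∀ z ∈ Complex.slitPlane, ∀ j k : Fin m,
      HasDerivAt (fun w => PhiK μ e w j k)
        ((PhiK μ e z * ∑ i : Fin n, (z ^ (((μ i - 1 : ℝ)) : ℂ)) • e i) j k) z) ∧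
    (∀ j k : Fin m,
      Tendsto (fun w => PhiK μ e w j k) (nhdsWithin 0 Complex.slitPlane)
        (nhds ((1 : Matrix (Fin m) (Fin m) ℂ) j k))) :=
  kostant_series_solves_ode_general e he μ hμ
end

section
/- Let n ≥ 1 and let γ₁, …, γ_n > −1 be real numbers with μ_i = γ_i + 1. Define Φ : ℂ∖ℝ_{≤0} → M_{n+1}(ℂ) by Φ(z)_{ii} = 1, Φ(z)_{ij} = 0 for i < j, and Φ(z)_{ij} = z^{μ_j + μ_{j+1} + ⋯ + μ_{i−1}} / ∏_{l=j}^{i−1} (μ_l + μ_{l+1} + ⋯ + μ_{i−1}) for i > j. Let ζ(z) ∈ M_{n+1}(ℂ) have entries ζ(z)_{i+1,i} = z^{γ_i} for 1 ≤ i ≤ n and all other entries 0. Then Φ′(z) = Φ(z) ζ(z) for every z ∈ ℂ∖ℝ_{≤0}, and Φ(z) → Id as z → 0 within ℂ∖ℝ_{≤0}. -/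
/-!
Below the diagonal, `Φ(z)_{ij} = z^{S_{ji}} / ∏_{l=j}^{i-1} S_{li}` with
`S_{li} = μ_l + ⋯ + μ_{i-1}`. Differentiating brings down the factor `S_{ji}`, which is the first
factor of the product, and `S_{ji} - 1 = S_{j+1,i} + γ_j`; so `Φ'_{ij} = Φ_{i,j+1} z^{γ_j}`, which
is the `(i, j)` entry of `Φ ζ` because `ζ` has a single nonzero entry `z^{γ_j}` in column `j`.
As all `S_{ji} > 0`, the entries below the diagonal tend to `0` at `z = 0`.
-/

open Complex Filter

/-- The explicit lower unitriangular matrix `Φ(z)` of the `A_n` Toda system, with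
`Φ(z)_{ij} = z^{μ_j + ⋯ + μ_{i−1}} / ∏_{l=j}^{i−1} (μ_l + ⋯ + μ_{i−1})` below the
diagonal (indices here are 0-based, `μ` is indexed by `0, …, n−1`). -/
noncomputable def PhiA (n : ℕ) (μ : ℕ → ℝ) (z : ℂ) : Matrix (Fin (n + 1)) (Fin (n + 1)) ℂ :=
  Matrix.of fun i j : Fin (n + 1) =>
    if (i : ℕ) = (j : ℕ) then 1
    else if (i : ℕ) < (j : ℕ) then 0
    else z ^ (((∑ l ∈ Finset.Ico (j : ℕ) (i : ℕ), μ l : ℝ)) : ℂ) /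
      ∏ l ∈ Finset.Ico (j : ℕ) (i : ℕ), ((∑ k ∈ Finset.Ico l (i : ℕ), μ k : ℝ) : ℂ)

/-- The matrix `ζ(z) = Σ_{i=1}^n z^{γ_i} e_{−α_i}`, i.e. `ζ(z)_{i+1,i} = z^{γ_i}`
(0-based indices, `γ` indexed by `0, …, n−1`). -/
noncomputable def zetaA (n : ℕ) (γ : ℕ → ℝ) (z : ℂ) : Matrix (Fin (n + 1)) (Fin (n + 1)) ℂ :=
  Matrix.of fun i j : Fin (n + 1) =>
    if (i : ℕ) = (j : ℕ) + 1 then z ^ ((γ (j : ℕ) : ℝ) : ℂ) else 0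

open Finset

/-- `Φ(z)_{ij}` for `j ≤ i` (at `j = i` it is `z^0 / 1 = 1`). -/
noncomputable def phiEntry (μ : ℕ → ℝ) (j i : ℕ) (z : ℂ) : ℂ :=
  z ^ ((∑ l ∈ Ico j i, μ l : ℝ) : ℂ) / ∏ l ∈ Ico j i, ((∑ k ∈ Ico l i, μ k : ℝ) : ℂ)

theorem phiEntry_self (μ : ℕ → ℝ) (i : ℕ) (z : ℂ) : phiEntry μ i i z = 1 := by
  simp [phiEntry]

theorem hasDerivAt_phiEntry {μ : ℕ → ℝ} {j i : ℕ} {z : ℂ} (hji : j < i)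
    (hS : ∑ l ∈ Ico j i, μ l ≠ 0) (hz : z ∈ slitPlane) :
    HasDerivAt (phiEntry μ j i) (phiEntry μ (j + 1) i z * z ^ ((μ j - 1 : ℝ) : ℂ)) z := by
  set S : ℝ := ∑ l ∈ Ico j i, μ l
  set S' : ℝ := ∑ l ∈ Ico (j + 1) i, μ l
  set C' : ℂ := ∏ l ∈ Ico (j + 1) i, ((∑ k ∈ Ico l i, μ k : ℝ) : ℂ)
  have hprod : ∏ l ∈ Ico j i, ((∑ k ∈ Ico l i, μ k : ℝ) : ℂ) = (S : ℂ) * C' :=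
    prod_eq_prod_Ico_succ_bot hji _
  have hexp : (S : ℂ) - 1 = (S' : ℂ) + ((μ j - 1 : ℝ) : ℂ) := by
    rw [show S = μ j + S' from sum_eq_sum_Ico_succ_bot hji μ]
    push_cast
    ring
  have hderiv := ((hasStrictDerivAt_cpow_const (c := (S : ℂ)) hz).hasDerivAt).div_const
    ((S : ℂ) * C')
  rw [hexp, cpow_add _ _ (slitPlane_ne_zero hz), mul_div_mul_left _ _ (ofReal_ne_zero.mpr hS)]
    at hderiv
  show HasDerivAt (fun w => w ^ (S : ℂ) / ∏ l ∈ Ico j i, ((∑ k ∈ Ico l i, μ k : ℝ) : ℂ))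
    (z ^ (S' : ℂ) / C' * _) z
  rwa [hprod, div_mul_eq_mul_div]

theorem tendsto_phiEntry_zero {μ : ℕ → ℝ} {j i : ℕ} (hS : 0 < ∑ l ∈ Ico j i, μ l) :
    Tendsto (phiEntry μ j i) (nhds 0) (nhds 0) := by
  have hcont := continuousAt_cpow_const_of_re_pos (z := 0) (Or.inl le_rfl)
    (w := ((∑ l ∈ Ico j i, μ l : ℝ) : ℂ)) (by simpa using hS)
  have hlim := hcont.tendsto.div_const (∏ l ∈ Ico j i, ((∑ k ∈ Ico l i, μ k : ℝ) : ℂ))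
  rwa [zero_cpow (ofReal_ne_zero.mpr hS.ne'), zero_div] at hlim

section PhiAEntries

variable {n : ℕ} {μ : ℕ → ℝ} {z : ℂ} {i j : Fin (n + 1)}

theorem PhiA_apply_eq_zero (h : (i : ℕ) < j) : PhiA n μ z i j = 0 := by
  simp only [PhiA, Matrix.of_apply, if_neg h.ne, if_pos h]

theorem PhiA_apply_eq_one_apply (h : (i : ℕ) ≤ j) : PhiA n μ z i j = (1 : Matrix _ _ ℂ) i j := by
  rcases h.eq_or_lt with h | h
  · obtain rfl : i = j := Fin.ext h
    simp [PhiA]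
  · rw [PhiA_apply_eq_zero h, Matrix.one_apply_ne (Fin.ne_of_val_ne h.ne)]

theorem PhiA_apply_eq_phiEntry (h : (j : ℕ) ≤ i) : PhiA n μ z i j = phiEntry μ j i z := by
  rcases h.eq_or_lt with h | h
  · simp [PhiA, h, phiEntry_self]
  · simp only [PhiA, phiEntry, Matrix.of_apply, if_neg h.ne', if_neg h.not_gt]

end PhiAEntries

theorem mul_zetaA_apply {n : ℕ} (A : Matrix (Fin (n + 1)) (Fin (n + 1)) ℂ) (γ : ℕ → ℝ) (z : ℂ)
    (i j : Fin (n + 1)) :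
    (A * zetaA n γ z) i j =
      if h : (j : ℕ) + 1 < n + 1 then A i ⟨j + 1, h⟩ * z ^ ((γ j : ℝ) : ℂ) else 0 := by
  rw [Matrix.mul_apply]
  split_ifs with h
  · rw [sum_eq_single (⟨j + 1, h⟩ : Fin (n + 1))]
    · simp [zetaA]
    · intro k _ hk
      simp [zetaA, Fin.ext_iff.not.mp hk]
    · simp
  · refine sum_eq_zero fun k _ => ?_
    simp [zetaA, show (k : ℕ) ≠ j + 1 by omega]

theorem sum_Ico_pos_of_pos {n : ℕ} {μ : ℕ → ℝ} (hμ : ∀ k < n, 0 < μ k) {a b : ℕ}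
    (hab : a < b) (hb : b ≤ n) : 0 < ∑ k ∈ Ico a b, μ k :=
  sum_pos (fun k hk => hμ k (by simp at hk; omega)) ⟨a, by simpa using hab⟩

section PositiveExponents

variable {n : ℕ} {μ : ℕ → ℝ} (hμ : ∀ k < n, 0 < μ k)
include hμ

theorem hasDerivAt_PhiA_apply {z : ℂ} (hz : z ∈ slitPlane) (i j : Fin (n + 1)) :
    HasDerivAt (fun w => PhiA n μ w i j) ((PhiA n μ z * zetaA n (fun k => μ k - 1) z) i j) z := by
  rw [mul_zetaA_apply]
  rcases lt_or_ge (j : ℕ) i with hji | hij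
  · have hS := sum_Ico_pos_of_pos hμ hji (Nat.le_of_lt_succ i.isLt)
    have hderiv := hasDerivAt_phiEntry hji hS.ne' hz
    rw [← PhiA_apply_eq_phiEntry (n := n) (i := i) (j := ⟨j + 1, by omega⟩) hji] at hderiv
    rw [dif_pos (by omega), funext fun w => PhiA_apply_eq_phiEntry (μ := μ) (z := w) hji.le]
    exact hderiv
  · have hrhs : (if h : (j : ℕ) + 1 < n + 1 then
        PhiA n μ z i ⟨j + 1, h⟩ * z ^ ((μ j - 1 : ℝ) : ℂ) else 0) = 0 := by
      split_ifs
      · rw [PhiA_apply_eq_zero (by simp; omega), zero_mul]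
      · rfl
    rw [hrhs, funext fun w => PhiA_apply_eq_one_apply (μ := μ) (z := w) hij]
    exact hasDerivAt_const _ _

theorem tendsto_PhiA_apply_nhdsWithin_zero (i j : Fin (n + 1)) :
    Tendsto (fun w => PhiA n μ w i j) (nhdsWithin 0 slitPlane) (nhds ((1 : Matrix _ _ ℂ) i j)) := by
  rcases lt_or_ge (j : ℕ) i with hji | hij
  · have hS := sum_Ico_pos_of_pos hμ hji (Nat.le_of_lt_succ i.isLt)
    rw [funext fun w => PhiA_apply_eq_phiEntry (μ := μ) (z := w) hji.le,
      Matrix.one_apply_ne (Fin.ne_of_val_ne hji.ne')]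
    exact (tendsto_phiEntry_zero hS).mono_left nhdsWithin_le_nhds
  · rw [funext fun w => PhiA_apply_eq_one_apply (μ := μ) (z := w) hij]
    exact tendsto_const_nhds

end PositiveExponents

theorem phiA_solves_ode_general (n : ℕ) (γ : ℕ → ℝ) (hγ : ∀ i < n, -1 < γ i)
    (μ : ℕ → ℝ) (hμ : ∀ i, μ i = γ i + 1) :
    (∀ z ∈ Complex.slitPlane, ∀ i j : Fin (n + 1),
      HasDerivAt (fun w => PhiA n μ w i j) ((PhiA n μ z * zetaA n γ z) i j) z) ∧
    (∀ i j : Fin (n + 1),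
      Tendsto (fun w => PhiA n μ w i j) (nhdsWithin 0 Complex.slitPlane)
        (nhds ((1 : Matrix (Fin (n + 1)) (Fin (n + 1)) ℂ) i j))) := by
  have hμpos : ∀ k < n, 0 < μ k := fun k hk => by linarith [hμ k, hγ k hk]
  obtain rfl : γ = fun k => μ k - 1 := funext fun k => by rw [hμ]; ring
  exact ⟨fun z hz => hasDerivAt_PhiA_apply hμpos hz, tendsto_PhiA_apply_nhdsWithin_zero hμpos⟩

/-- For `γ_i > −1`, `μ_i = γ_i + 1`, the explicit lower unitriangular
matrix `Φ` satisfies `Φ′(z) = Φ(z) ζ(z)` on `ℂ∖ℝ_{≤0}` (entrywise) and `Φ(z) → Id` as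
`z → 0` within `ℂ∖ℝ_{≤0}`, where `ζ(z)` has entries `ζ(z)_{i+1,i} = z^{γ_i}`. -/
theorem phiA_solves_ode (n : ℕ) (hn : 1 ≤ n) (γ : ℕ → ℝ) (hγ : ∀ i < n, -1 < γ i)
    (μ : ℕ → ℝ) (hμ : ∀ i, μ i = γ i + 1) :
    (∀ z ∈ Complex.slitPlane, ∀ i j : Fin (n + 1),
      HasDerivAt (fun w => PhiA n μ w i j) ((PhiA n μ z * zetaA n γ z) i j) z) ∧
    (∀ i j : Fin (n + 1),
      Tendsto (fun w => PhiA n μ w i j) (nhdsWithin 0 Complex.slitPlane)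
        (nhds ((1 : Matrix (Fin (n + 1)) (Fin (n + 1)) ℂ) i j))) :=
  phiA_solves_ode_general n γ hγ μ hμ
end

section
/- Let γ > −1, μ = γ + 1, λ > 0 and c ∈ ℂ, and let u(z) = 2γ log|z| − 2 log( λ² + λ^{−2} | z^{μ}/μ + c |² ) on ℂ∖ℝ_{≤0} (principal power z^{μ}). Then u(z) + 2(γ + 2) log|z| converges to 4 log( λ (γ+1) ) as |z| → ∞ with z ∈ ℂ∖ℝ_{≤0}; in particular u(z) = −2(2+γ) log|z| + O(1) as z → ∞. -/
/-!
For the principal power `‖z ^ μ‖ = ‖z‖ ^ μ` on all of `ℂ`, so adding `2(γ + 2) log ‖z‖` turns `u`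
into `-2 log (λ² / ‖z ^ μ‖² + λ⁻² (‖z ^ μ / μ + c‖ / ‖z ^ μ‖)²)`. As `‖z‖ → ∞` also
`‖z ^ μ‖ → ∞`, so the first term tends to `0` and the quotient to `μ⁻¹`; the argument of the
logarithm therefore tends to `(λμ)⁻²`.
-/

open Complex Filter Bornology Topology

theorem Filter.Tendsto.norm_div_add_div_norm {α 𝕜 : Type*} [NormedField 𝕜] {l : Filter α}
    {f : α → 𝕜} (hf : Tendsto f l (cobounded 𝕜)) (b c : 𝕜) :
    Tendsto (fun x => ‖f x / b + c‖ / ‖f x‖) l (𝓝 ‖b‖⁻¹) := by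
  have hlim : Tendsto (fun x => ‖b⁻¹ + c * (f x)⁻¹‖) l (𝓝 ‖b⁻¹ + c * 0‖) :=
    (tendsto_const_nhds.add (tendsto_const_nhds.mul (tendsto_inv₀_cobounded.comp hf))).norm
  rw [mul_zero, add_zero, norm_inv] at hlim
  refine hlim.congr' ?_
  filter_upwards [hf.eventually_ne_cobounded 0] with x hx
  rw [← norm_div, add_div, div_div_cancel_left' hx, div_eq_mul_inv c]

theorem tendsto_cpow_ofReal_cobounded {μ : ℝ} (hμ : 0 < μ) :
    Tendsto (fun z : ℂ => z ^ (μ : ℂ)) (cobounded ℂ) (cobounded ℂ) := by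
  simpa only [← tendsto_norm_atTop_iff_cobounded, norm_cpow_real, Function.comp_def] using
    (tendsto_rpow_atTop hμ).comp tendsto_norm_cobounded_atTop

theorem two_mul_log_sub_two_mul_log_add_eq_neg_two_mul_log_div {γ r S : ℝ} (hr : 0 < r)
    (hS : 0 < S) :
    2 * γ * Real.log r - 2 * Real.log S + 2 * (γ + 2) * Real.log r =
      -2 * Real.log (S / (r ^ (γ + 1)) ^ 2) := by
  rw [Real.log_div hS.ne' (by positivity), Real.log_pow, Real.log_rpow hr]
  push_cast
  ring

theorem neg_two_mul_log_inv_sq_mul_inv_sq (a b : ℝ) :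
    -2 * Real.log (a⁻¹ ^ 2 * b⁻¹ ^ 2) = 4 * Real.log (a * b) := by
  rw [← mul_pow, ← mul_inv, Real.log_pow, Real.log_inv]
  push_cast
  ring

/-- For `γ > −1`, `μ = γ + 1`, `λ > 0`, `c ∈ ℂ`, the solution
`u(z) = 2γ log|z| − 2 log(λ² + λ^{−2}|z^μ/μ + c|²)` of the singular Liouville equation
satisfies `u(z) + 2(γ+2) log|z| → 4 log(λ(γ+1))` as `|z| → ∞` within `ℂ∖ℝ_{≤0}`;
in particular `u(z) = −2(2+γ) log|z| + O(1)` at infinity. -/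
theorem liouville_asymptotics (γ : ℝ) (hγ : -1 < γ) (μ : ℝ) (hμ : μ = γ + 1)
    (lam : ℝ) (hlam : 0 < lam) (c : ℂ) (u : ℂ → ℝ)
    (hu : ∀ z : ℂ, u z = 2 * γ * Real.log ‖z‖ -
      2 * Real.log (lam ^ 2 + lam⁻¹ ^ 2 * ‖z ^ ((μ : ℝ) : ℂ) / (μ : ℂ) + c‖ ^ 2)) :
    Tendsto (fun z : ℂ => u z + 2 * (γ + 2) * Real.log ‖z‖)
      (Filter.comap (fun z : ℂ => ‖z‖) Filter.atTop ⊓ Filter.principal Complex.slitPlane)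
      (nhds (4 * Real.log (lam * (γ + 1)))) := by
  subst hμ
  have hμ : 0 < γ + 1 := by linarith
  have hpow : Tendsto (fun z : ℂ => z ^ ((γ + 1 : ℝ) : ℂ)) (cobounded ℂ) (cobounded ℂ) :=
    tendsto_cpow_ofReal_cobounded hμ
  have hfirst : Tendsto (fun z : ℂ => lam ^ 2 / ‖z ^ ((γ + 1 : ℝ) : ℂ)‖ ^ 2) (cobounded ℂ) (𝓝 0) :=
    ((tendsto_pow_atTop two_ne_zero).comp
      (tendsto_norm_cobounded_atTop.comp hpow)).const_div_atTop _
  have hsecond := (hpow.norm_div_add_div_norm ((γ + 1 : ℝ) : ℂ) c).pow 2 |>.const_mul (lam⁻¹ ^ 2)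
  rw [norm_real, Real.norm_of_nonneg hμ.le] at hsecond
  have hlog := ((Real.continuousAt_log (by positivity)).tendsto.comp
    (hfirst.add hsecond)).const_mul (-2)
  rw [zero_add, neg_two_mul_log_inv_sq_mul_inv_sq] at hlog
  refine (hlog.congr' ?_).mono_left (by rw [comap_norm_atTop]; exact inf_le_left)
  filter_upwards [eventually_ne_cobounded 0] with z hz
  rw [hu, two_mul_log_sub_two_mul_log_add_eq_neg_two_mul_log_div (norm_pos_iff.mpr hz)
    (by positivity), Function.comp_apply, norm_cpow_real]
  congr 2
  ring
end

section
/- Let μ > 0 with μ ∉ ℤ and let c ∈ ℂ with c ≠ 0. Then there exists z ∈ ℂ∖ℝ_{≤0} such that | z^{μ}/μ + c | ≠ | z^{μ}/μ + e^{−2πiμ} c |, where z^{μ} is the principal power. Consequently, for λ > 0 and γ = μ − 1, the two functions u_c(z) = 2γ log|z| − 2 log(λ² + λ^{−2}|z^{μ}/μ + c|²) and u_{c′}(z) with c′ = e^{−2πiμ} c do not coincide on ℂ∖ℝ_{≤0}. -/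
/-!
Since `E = e^{-2πiμ}` has modulus one, `‖w + c‖ = ‖w + E c‖` says exactly that
`Re (w · conj d) = 0` with `d = c - E c`, and `d ≠ 0` because `μ ∉ ℤ` forces `E ≠ 1`.
The values `z^μ` for `z ∈ ℂ∖ℝ_{≤0}` are not confined to a line through the origin: `1^μ = 1`
and `(e^{iθ})^μ = e^{iθμ}` with `θ = π/(μ+1)`, for which `0 < θμ < π`. So one of these two
points gives `Re (z^μ/μ · conj d) ≠ 0`. Finally `u_c(z)` determines `‖z^μ/μ + c‖`, because
`log` is injective on the positive reals.
-/

open scoped Real ComplexConjugate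

namespace Complex

theorem norm_add_eq_norm_add_mul_iff {E : ℂ} (hE : ‖E‖ = 1) (w c : ℂ) :
    ‖w + c‖ = ‖w + E * c‖ ↔ (w * conj (c - E * c)).re = 0 := by
  rw [← pow_left_inj₀ (norm_nonneg _) (norm_nonneg _) two_ne_zero, Complex.sq_norm,
    Complex.sq_norm, normSq_add, normSq_add, normSq_mul, ← Complex.sq_norm E, hE, map_sub,
    mul_sub, sub_re]
  constructor <;> intro h <;> linarith

theorem exp_ofReal_mul_I_cpow {θ : ℝ} (hθ : θ ∈ Set.Ioc (-π) π) (s : ℂ) :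
    exp (θ * I) ^ s = exp (θ * s * I) := by
  rw [cpow_def_of_ne_zero (exp_ne_zero _), log_exp] <;> simp [hθ.1, hθ.2, mul_right_comm]

theorem norm_exp_neg_two_pi_I_mul (x : ℝ) : ‖exp (-2 * π * I * x)‖ = 1 := by
  simp [norm_exp]

theorem exp_neg_two_pi_I_mul_ne_one {x : ℝ} (hx : ∀ k : ℤ, (k : ℝ) ≠ x) :
    exp (-2 * π * I * x) ≠ 1 := by
  rw [Ne, exp_eq_one_iff]
  rintro ⟨n, hn⟩
  refine hx (-n) ?_
  have him : -(2 * π * x) = n * (2 * π) := by simpa using congrArg im hn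
  push_cast
  exact mul_left_cancel₀ Real.two_pi_pos.ne' (by linarith)

theorem exists_mem_slitPlane_re_cpow_mul_ne_zero {μ : ℝ} (hμ : 0 < μ) {a : ℂ} (ha : a ≠ 0) :
    ∃ z ∈ slitPlane, (z ^ (μ : ℂ) * a).re ≠ 0 := by
  by_cases hre : a.re = 0
  · have him : a.im ≠ 0 := fun him => ha (ext hre him)
    set θ := π / (μ + 1)
    have hθ : 0 < θ ∧ θ < π := ⟨by positivity,
      div_lt_self Real.pi_pos (by linarith)⟩
    have hθμ : 0 < θ * μ ∧ θ * μ < π := ⟨by positivity, by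
      rw [div_mul_eq_mul_div, div_lt_iff₀ (by linarith)]; nlinarith [Real.pi_pos]⟩
    refine ⟨exp (θ * I), ?_, ?_⟩
    · rw [mem_slitPlane_iff, exp_ofReal_mul_I_im]
      exact Or.inr (Real.sin_pos_of_pos_of_lt_pi hθ.1 hθ.2).ne'
    · rw [exp_ofReal_mul_I_cpow ⟨by linarith, hθ.2.le⟩, ← ofReal_mul, mul_re,
        exp_ofReal_mul_I_re, exp_ofReal_mul_I_im, hre]
      simpa using ⟨(Real.sin_pos_of_pos_of_lt_pi hθμ.1 hθμ.2).ne', him⟩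
  · exact ⟨1, one_mem_slitPlane, by simpa⟩

theorem exists_mem_slitPlane_norm_cpow_div_add_ne {μ : ℝ} (hμ : 0 < μ)
    (hμint : ∀ k : ℤ, (k : ℝ) ≠ μ) {c : ℂ} (hc : c ≠ 0) :
    ∃ z ∈ slitPlane, ‖z ^ (μ : ℂ) / μ + c‖ ≠ ‖z ^ (μ : ℂ) / μ + exp (-2 * π * I * μ) * c‖ := by
  have hd : c - exp (-2 * π * I * μ) * c ≠ 0 := by
    rw [← one_sub_mul]
    exact mul_ne_zero (sub_ne_zero.2 (exp_neg_two_pi_I_mul_ne_one hμint).symm) hc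
  obtain ⟨z, hz, hre⟩ := exists_mem_slitPlane_re_cpow_mul_ne_zero hμ ((map_ne_zero conj).2 hd)
  refine ⟨z, hz, ?_⟩
  rw [Ne, norm_add_eq_norm_add_mul_iff (norm_exp_neg_two_pi_I_mul μ), div_mul_eq_mul_div,
    div_ofReal_re]
  exact div_ne_zero hre hμ.ne'

end Complex

theorem Real.eq_of_log_sq_add_inv_sq_mul_sq_eq {lam X Y : ℝ} (hlam : lam ≠ 0) (hX : 0 ≤ X)
    (hY : 0 ≤ Y)
    (h : Real.log (lam ^ 2 + lam⁻¹ ^ 2 * X ^ 2) = Real.log (lam ^ 2 + lam⁻¹ ^ 2 * Y ^ 2)) :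
    X = Y := by
  have hpos : ∀ Z : ℝ, lam ^ 2 + lam⁻¹ ^ 2 * Z ^ 2 ∈ Set.Ioi 0 := fun Z => by
    simp only [Set.mem_Ioi]; positivity
  have := Real.log_injOn_pos (hpos X) (hpos Y) h
  rwa [add_right_inj, mul_right_inj' (by positivity), pow_left_inj₀ hX hY two_ne_zero] at this

theorem liouville_monodromy_general (μ : ℝ) (hμpos : 0 < μ) (hμint : ∀ k : ℤ, (k : ℝ) ≠ μ)
    (c : ℂ) (hc : c ≠ 0) (lam : ℝ) (hlam : 0 < lam) (γ : ℝ)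
    (u : ℂ → ℂ → ℝ)
    (hu : ∀ c' : ℂ, ∀ z : ℂ, u c' z = 2 * γ * Real.log ‖z‖ -
      2 * Real.log (lam ^ 2 +
        lam⁻¹ ^ 2 * ‖z ^ ((μ : ℝ) : ℂ) / (μ : ℂ) + c'‖ ^ 2)) :
    (∃ z ∈ Complex.slitPlane,
      ‖z ^ ((μ : ℝ) : ℂ) / (μ : ℂ) + c‖ ≠
        ‖z ^ ((μ : ℝ) : ℂ) / (μ : ℂ) +
          Complex.exp (-2 * Real.pi * Complex.I * μ) * c‖) ∧
    ¬ (∀ z ∈ Complex.slitPlane,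
        u c z = u (Complex.exp (-2 * Real.pi * Complex.I * μ) * c) z) := by
  obtain ⟨z, hz, hne⟩ := Complex.exists_mem_slitPlane_norm_cpow_div_add_ne hμpos hμint hc
  refine ⟨⟨z, hz, hne⟩, fun hall => hne ?_⟩
  have hz_eq := hall z hz
  rw [hu, hu] at hz_eq
  exact Real.eq_of_log_sq_add_inv_sq_mul_sq_eq hlam.ne' (norm_nonneg _) (norm_nonneg _)
    (by linarith)

/-- **monodromy.** For `μ > 0` non-integral and `c ≠ 0`, there is
`z ∈ ℂ∖ℝ_{≤0}` with `|z^μ/μ + c| ≠ |z^μ/μ + e^{−2πiμ}c|` (principal power `z^μ`);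
consequently for any `λ > 0` and `γ = μ − 1` the solutions `u_c` and `u_{c′}`,
`c′ = e^{−2πiμ}c`, of the singular Liouville equation do not coincide on `ℂ∖ℝ_{≤0}`. -/
theorem liouville_monodromy (μ : ℝ) (hμpos : 0 < μ) (hμint : ∀ k : ℤ, (k : ℝ) ≠ μ)
    (c : ℂ) (hc : c ≠ 0) (lam : ℝ) (hlam : 0 < lam) (γ : ℝ) (hγ : γ = μ - 1)
    (u : ℂ → ℂ → ℝ)
    (hu : ∀ c' : ℂ, ∀ z : ℂ, u c' z = 2 * γ * Real.log ‖z‖ -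
      2 * Real.log (lam ^ 2 +
        lam⁻¹ ^ 2 * ‖z ^ ((μ : ℝ) : ℂ) / (μ : ℂ) + c'‖ ^ 2)) :
    (∃ z ∈ Complex.slitPlane,
      ‖z ^ ((μ : ℝ) : ℂ) / (μ : ℂ) + c‖ ≠
        ‖z ^ ((μ : ℝ) : ℂ) / (μ : ℂ) +
          Complex.exp (-2 * Real.pi * Complex.I * μ) * c‖) ∧
    ¬ (∀ z ∈ Complex.slitPlane,
        u c z = u (Complex.exp (-2 * Real.pi * Complex.I * μ) * c) z) :=
  liouville_monodromy_general μ hμpos hμint c hc lam hlam γ u hu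
end
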